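/- Let I(μ)=K(μ_sc|μ)+Σ_{λ∈E(μ)}F(λ) for μ∈S_1([−2,2]) and I(μ)=+∞ for compactly supported probability measures μ∉S_1([−2,2]). Then I(μ)=0 if and only if μ=μ_sc. -/

import Mathlib

/-!
Gibbs' inequality: the relative entropy of one probability measure with respect to another vanishes
only when they coincide, so `I(μ) = 0` forces `μ ∈ S_1` and `K(μ_sc|μ) = 0`, i.e. `μ = μ_sc`.
Conversely the density of `μ_sc` is positive exactly on `(-2,2)`, so its support is `[-2,2]`;
thus `μ_sc ∈ S_1` with `E(μ_sc) = ∅`, and `I(μ_sc) = K(μ_sc|μ_sc) = 0`.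
-/

open MeasureTheory ProbabilityTheory Filter Topology Polynomial
open scoped ENNReal NNReal

noncomputable section

/-- The semicircle law on `[-2,2]`, with Lebesgue density `√(4-x²)/(2π)`. -/
def semicircle : Measure ℝ :=
  volume.withDensity (fun x => ENNReal.ofReal
    (if x ∈ Set.Icc (-2 : ℝ) 2 then Real.sqrt (4 - x ^ 2) / (2 * Real.pi) else 0))

/-- The `k`-th moment of the semicircle law. -/
def mSc (k : ℕ) : ℝ := ∫ x, x ^ k ∂semicircle

/-- The space of compactly supported probability measures on `ℝ`, carrying the topology of
weak convergence (inherited from `ProbabilityMeasure ℝ`). -/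
abbrev CPM : Type := {μ : ProbabilityMeasure ℝ // ∃ K : Set ℝ, IsCompact K ∧ (μ : Measure ℝ) Kᶜ = 0}

/-- The (topological) support of a measure on `ℝ`: points all of whose neighborhoods have
positive measure. -/
def msupport (μ : Measure ℝ) : Set ℝ := {x | ∀ U ∈ nhds x, μ U ≠ 0}

/-- The essential support outside `[-2,2]`. -/
def Eset (μ : Measure ℝ) : Set ℝ := msupport μ \ Set.Icc (-2) 2

/-- `μ ∈ S_1([-2,2])`: the support of `μ` is `[-2,2] ∪ E(μ)` with `E(μ)` an at most countable
subset of `ℝ \ [-2,2]`. -/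
def inS1 (μ : Measure ℝ) : Prop :=
  Set.Icc (-2 : ℝ) 2 ⊆ msupport μ ∧ (Eset μ).Countable

/-- `F(x) = ∫_2^{|x|} √(y² - 4) dy`. -/
def Fout (x : ℝ) : ℝ := ∫ y in (2 : ℝ)..|x|, Real.sqrt (y ^ 2 - 4)

-- The Kullback–Leibler divergence `K(ν|μ) = ∫ log(dν/dμ) dν` if `ν ≪ μ` (and the integral
-- exists), and `+∞` otherwise.
open Classical in
def KLdiv (ν μ : Measure ℝ) : ℝ≥0∞ :=
  if ν ≪ μ ∧ Integrable (fun x => Real.log (ν.rnDeriv μ x).toReal) ν then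
    ENNReal.ofReal (∫ x, Real.log (ν.rnDeriv μ x).toReal ∂ν)
  else ⊤

-- The rate function `I(μ) = K(μ_sc|μ) + Σ_{λ ∈ E(μ)} F(λ)` for `μ ∈ S_1([-2,2])`,
-- and `I(μ) = +∞` otherwise.
open Classical in
def rateSpec (μ : Measure ℝ) : ℝ≥0∞ :=
  if inS1 μ then KLdiv semicircle μ + ∑' x : (Eset μ), ENNReal.ofReal (Fout x) else ⊤

open InformationTheory

def semicircleDensity (x : ℝ) : ℝ≥0∞ :=
  ENNReal.ofReal (if x ∈ Set.Icc (-2 : ℝ) 2 then Real.sqrt (4 - x ^ 2) / (2 * Real.pi) else 0)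

lemma semicircle_eq_withDensity : semicircle = volume.withDensity semicircleDensity := rfl

lemma semicircleDensity_eq_indicator :
    semicircleDensity = (Set.Icc (-2 : ℝ) 2).indicator
      fun x => ENNReal.ofReal (Real.sqrt (4 - x ^ 2) / (2 * Real.pi)) := by
  ext x
  by_cases hx : x ∈ Set.Icc (-2 : ℝ) 2 <;> simp [semicircleDensity, hx]

lemma measurable_semicircleDensity : Measurable semicircleDensity := by
  rw [semicircleDensity_eq_indicator]
  exact Measurable.indicator (by fun_prop) measurableSet_Icc

lemma semicircleDensity_ne_zero {x : ℝ} (hx : x ∈ Set.Ioo (-2 : ℝ) 2) :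
    semicircleDensity x ≠ 0 := by
  have h4 : 0 < 4 - x ^ 2 := by nlinarith [hx.1, hx.2]
  rw [semicircleDensity, if_pos (Set.Ioo_subset_Icc_self hx), Ne, ENNReal.ofReal_eq_zero, not_le]
  exact div_pos (Real.sqrt_pos.2 h4) (by positivity)

lemma integral_sqrt_four_sub_sq : ∫ x in (-2 : ℝ)..2, Real.sqrt (4 - x ^ 2) = 2 * Real.pi := by
  have hscale : ∀ x : ℝ, Real.sqrt (4 - (2 * x) ^ 2) = 2 * Real.sqrt (1 - x ^ 2) := fun x => by
    rw [show (4 : ℝ) - (2 * x) ^ 2 = 2 ^ 2 * (1 - x ^ 2) by ring,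
      Real.sqrt_mul (by positivity), Real.sqrt_sq zero_le_two]
  have h := intervalIntegral.integral_comp_mul_left (a := -1) (b := 1)
    (fun x => Real.sqrt (4 - x ^ 2)) two_ne_zero
  simp only [hscale, intervalIntegral.integral_const_mul, integral_sqrt_one_sub_sq] at h
  norm_num at h
  linarith

instance : IsProbabilityMeasure semicircle := by
  constructor
  have hint : IntegrableOn (fun x : ℝ => Real.sqrt (4 - x ^ 2) / (2 * Real.pi))
      (Set.Icc (-2) 2) := (by fun_prop : Continuous _).integrableOn_Icc
  rw [semicircle_eq_withDensity, withDensity_apply _ MeasurableSet.univ, Measure.restrict_univ,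
    semicircleDensity_eq_indicator, lintegral_indicator measurableSet_Icc,
    ← ofReal_integral_eq_lintegral_ofReal hint (.of_forall fun x => by positivity),
    integral_Icc_eq_integral_Ioc, ← intervalIntegral.integral_of_le (by norm_num),
    intervalIntegral.integral_div, integral_sqrt_four_sub_sq, div_self (by positivity),
    ENNReal.ofReal_one]

lemma semicircle_compl_Icc : semicircle (Set.Icc (-2) 2)ᶜ = 0 := by
  rw [semicircle_eq_withDensity, semicircleDensity_eq_indicator,
    withDensity_indicator measurableSet_Icc]
  exact withDensity_absolutelyContinuous _ _ (by simp [Measure.restrict_apply' measurableSet_Icc])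

lemma msupport_subset_of_measure_compl_eq_zero {μ : Measure ℝ} {C : Set ℝ} (hC : IsClosed C)
    (hμC : μ Cᶜ = 0) : msupport μ ⊆ C := fun x hx => by
  by_contra hxC
  exact hx Cᶜ (hC.isOpen_compl.mem_nhds hxC) hμC

lemma closure_subset_msupport_withDensity {μ : Measure ℝ} [μ.IsOpenPosMeasure]
    {f : ℝ → ℝ≥0∞} (hf : AEMeasurable f μ) {s : Set ℝ} (hs : IsOpen s)
    (hfs : ∀ x ∈ s, f x ≠ 0) : closure s ⊆ msupport (μ.withDensity f) := by
  intro x hx U hU hU0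
  rw [withDensity_apply_eq_zero' hf] at hU0
  have hne : (interior U ∩ s).Nonempty := mem_closure_iff_nhds.1 hx _ (interior_mem_nhds.2 hU)
  refine (isOpen_interior.inter hs).measure_ne_zero μ hne (measure_mono_null ?_ hU0)
  exact fun y hy => ⟨hfs y hy.2, interior_subset hy.1⟩

lemma msupport_semicircle : msupport semicircle = Set.Icc (-2) 2 := by
  refine (msupport_subset_of_measure_compl_eq_zero isClosed_Icc semicircle_compl_Icc).antisymm ?_
  rw [← closure_Ioo (by norm_num : (-2 : ℝ) ≠ 2)]
  exact closure_subset_msupport_withDensity measurable_semicircleDensity.aemeasurable isOpen_Ioo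
    fun x hx => semicircleDensity_ne_zero hx

lemma Eset_semicircle : Eset semicircle = ∅ := by
  rw [Eset, msupport_semicircle, Set.sdiff_self]

lemma inS1_semicircle : inS1 semicircle :=
  ⟨msupport_semicircle.ge, Eset_semicircle ▸ Set.countable_empty⟩

/-- Mathlib's `klDiv` carries the correction term `μ.real univ - ν.real univ`, which vanishes
between probability measures. -/
lemma KLdiv_eq_klDiv (ν μ : Measure ℝ) [IsProbabilityMeasure ν] [IsProbabilityMeasure μ] :
    KLdiv ν μ = klDiv ν μ := by
  simp only [KLdiv, klDiv_def, llr_def, probReal_univ, add_sub_cancel_right]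
  congr

lemma KLdiv_eq_zero_iff {ν μ : Measure ℝ} [IsProbabilityMeasure ν] [IsProbabilityMeasure μ] :
    KLdiv ν μ = 0 ↔ ν = μ := by
  rw [KLdiv_eq_klDiv, klDiv_eq_zero_iff]

theorem rate_zero_iff_semicircle_general (μ : Measure ℝ) (hμ : IsProbabilityMeasure μ) :
    rateSpec μ = 0 ↔ μ = semicircle := by
  constructor
  · intro h
    by_cases hS : inS1 μ
    · rw [rateSpec, if_pos hS, add_eq_zero] at h
      exact (KLdiv_eq_zero_iff.1 h.1).symm
    · simp [rateSpec, hS] at h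
  · rintro rfl
    simp [rateSpec, inS1_semicircle, Eset_semicircle, KLdiv_eq_klDiv]

/-- **The rate function of Theorem 2.1 vanishes exactly at the semicircle law.**
For a compactly supported probability measure `μ` on `ℝ`,
`I(μ) = K(μ_sc|μ) + Σ_{λ∈E(μ)} F(λ)` (for `μ ∈ S_1([-2,2])`, `+∞` otherwise) is zero
if and only if `μ = μ_sc`. -/
theorem rate_zero_iff_semicircle (μ : Measure ℝ) (hμ : IsProbabilityMeasure μ)
    (hcs : ∃ K : Set ℝ, IsCompact K ∧ μ Kᶜ = 0) :
    rateSpec μ = 0 ↔ μ = semicircle :=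
  rate_zero_iff_semicircle_general μ hμ

end
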